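/- Let K be a field and S = K[x₁,…,xₙ]. Every nonzero square-free supported polynomial f ∈ S is a squarefree element of S, i.e., whenever g² divides f for some g ∈ S, the element g is a unit. -/

import Mathlib

/-! Over a domain `degreeOf i` is additive on products, so `g * g ∣ f` forces
`2 * degreeOf i g ≤ degreeOf i f ≤ 1`; hence `g` involves no variable, i.e. it is a nonzero
constant. -/

/-- A multivariate polynomial is *square-free supported* if every monomial in its support
is square-free, i.e. every variable occurs with exponent at most `1`. -/
def SquarefreeSupported {R : Type*} [CommSemiring R] {n : ℕ}
    (f : MvPolynomial (Fin n) R) : Prop :=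
  ∀ m ∈ f.support, ∀ i : Fin n, m i ≤ 1

namespace MvPolynomial

theorem degreeOf_le_of_dvd {σ R : Type*} [CommSemiring R] [NoZeroDivisors R]
    {p q : MvPolynomial σ R} (h : p ∣ q) (hq : q ≠ 0) (i : σ) :
    degreeOf i p ≤ degreeOf i q := by
  obtain ⟨r, rfl⟩ := h
  rw [degreeOf_mul_eq (left_ne_zero_of_mul hq) (right_ne_zero_of_mul hq)]
  exact Nat.le_add_right _ _

theorem totalDegree_eq_zero_of_forall_degreeOf_eq_zero {σ R : Type*} [CommSemiring R]
    {p : MvPolynomial σ R} (h : ∀ i, degreeOf i p = 0) : totalDegree p = 0 :=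
  (totalDegree_eq_zero_iff σ p).mpr fun m hm i =>
    Nat.le_zero.mp (degreeOf_le_iff.mp (h i).le m hm)

theorem isUnit_of_totalDegree_eq_zero {σ K : Type*} [Field K] {p : MvPolynomial σ K}
    (hp : p ≠ 0) (h : totalDegree p = 0) : IsUnit p := by
  rw [totalDegree_eq_zero_iff_eq_C] at h
  rw [h, ne_eq, C_eq_zero] at hp
  rw [h]
  exact (isUnit_iff_ne_zero.mpr hp).map C

end MvPolynomial

open MvPolynomial

theorem SquarefreeSupported.degreeOf_le_one {R : Type*} [CommSemiring R] {n : ℕ}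
    {f : MvPolynomial (Fin n) R} (hf : SquarefreeSupported f) (i : Fin n) :
    degreeOf i f ≤ 1 :=
  degreeOf_le_iff.mpr fun m hm => hf m hm i

/-- Every nonzero square-free supported polynomial is a squarefree element
of `K[x₁,…,xₙ]`. -/
theorem squarefree_of_squarefreeSupported {K : Type*} [Field K] {n : ℕ}
    (f : MvPolynomial (Fin n) K) (hf : f ≠ 0) (hsq : SquarefreeSupported f) :
    Squarefree f := by
  intro g hgg
  have hg : g ≠ 0 := by
    rintro rfl
    exact hf (zero_dvd_iff.mp (by simpa using hgg))
  have hdeg : ∀ i, degreeOf i g = 0 := fun i => by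
    have h2 := degreeOf_le_of_dvd hgg hf i
    rw [degreeOf_mul_eq hg hg] at h2
    have h1 := hsq.degreeOf_le_one i
    omega
  exact isUnit_of_totalDegree_eq_zero hg (totalDegree_eq_zero_of_forall_degreeOf_eq_zero hdeg)
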